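/- Let n be a positive integer, T ≥ 0 and δ ≥ 0. Let H, H' : ℝ → Matrix (Fin n) (Fin n) ℂ be time-dependent Hamiltonians (H(t) and H'(t) Hermitian for every t ∈ [0,T]) and let ψ, ψ' : ℝ → EuclideanSpace ℂ (Fin n) solve the Schrödinger equation for H and H' respectively on [0,T], with ψ(0) = ψ'(0) and ‖ψ(0)‖ = 1. If ‖H(t) − H'(t)‖ ≤ δ (spectral norm) for all t ∈ [0,T], then the real part of the inner product ⟪ψ'(T), ψ(T)⟫ is at least 1 − δT. -/

import Mathlib

open scoped Matrix.Norms.L2Operator InnerProductSpace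

/-!
Along two Schrödinger flows the overlap `f t = ⟪ψ' t, ψ t⟫` has derivative
`-i ⟪ψ' t, (H t - H' t) ψ t⟫`, because the self-adjointness of `H'` cancels the common part of the
two generators. Both flows are unitary (the case `H = H'`, `ψ = ψ'` gives `f' = 0`), so the
derivative is bounded by `δ`, and the mean value inequality gives `|f T - f 0| ≤ δ T` with
`f 0 = ‖ψ 0‖² = 1`.
-/

open Set

section SchrodingerFlow

variable {E : Type*} [NormedAddCommGroup E] [InnerProductSpace ℂ E]

theorem hasDerivAt_inner_of_schrodinger {L L' : E →L[ℂ] E}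
    (hL' : (L' : E →ₗ[ℂ] E).IsSymmetric) {ψ ψ' : ℝ → E} {t : ℝ}
    (hψ : HasDerivAt ψ (-Complex.I • L (ψ t)) t)
    (hψ' : HasDerivAt ψ' (-Complex.I • L' (ψ' t)) t) :
    HasDerivAt (fun s => ⟪ψ' s, ψ s⟫_ℂ) (-Complex.I * ⟪ψ' t, (L - L') (ψ t)⟫_ℂ) t := by
  refine (hψ'.inner ℂ hψ).congr_deriv ?_
  have hsymm : ⟪L' (ψ' t), ψ t⟫_ℂ = ⟪ψ' t, L' (ψ t)⟫_ℂ := hL' _ _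
  simp only [FunLike.coe_sub, Pi.sub_apply, inner_sub_right, inner_smul_left,
    inner_smul_right, hsymm, map_neg, Complex.conj_I]
  ring

variable {a b : ℝ} {L L' : ℝ → E →L[ℂ] E} {ψ ψ' : ℝ → E}

theorem norm_eq_of_schrodinger (hL : ∀ t ∈ Icc a b, (L t : E →ₗ[ℂ] E).IsSymmetric)
    (hψ : ∀ t ∈ Icc a b, HasDerivAt ψ (-Complex.I • L t (ψ t)) t) :
    ∀ t ∈ Icc a b, ‖ψ t‖ = ‖ψ a‖ := by
  intro t ht
  have hderiv : ∀ s ∈ Icc a b,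
      HasDerivWithinAt (fun s => ⟪ψ s, ψ s⟫_ℂ) 0 (Icc a b) s := fun s hs => by
    simpa using (hasDerivAt_inner_of_schrodinger (hL s hs) (hψ s hs) (hψ s hs)).hasDerivWithinAt
  have hconst := norm_image_sub_le_of_norm_deriv_le_segment' hderiv (fun _ _ => norm_zero.le) t ht
  rw [zero_mul, norm_le_zero_iff, sub_eq_zero, inner_self_eq_norm_sq_to_K,
    inner_self_eq_norm_sq_to_K] at hconst
  exact_mod_cast (sq_eq_sq₀ (norm_nonneg _) (norm_nonneg _)).1 (by exact_mod_cast hconst)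

theorem norm_inner_sub_inner_le_of_schrodinger {δ : ℝ}
    (hL : ∀ t ∈ Icc a b, (L t : E →ₗ[ℂ] E).IsSymmetric)
    (hL' : ∀ t ∈ Icc a b, (L' t : E →ₗ[ℂ] E).IsSymmetric)
    (hψ : ∀ t ∈ Icc a b, HasDerivAt ψ (-Complex.I • L t (ψ t)) t)
    (hψ' : ∀ t ∈ Icc a b, HasDerivAt ψ' (-Complex.I • L' t (ψ' t)) t)
    (hclose : ∀ t ∈ Icc a b, ‖L t - L' t‖ ≤ δ) :
    ∀ t ∈ Icc a b, ‖⟪ψ' t, ψ t⟫_ℂ - ⟪ψ' a, ψ a⟫_ℂ‖ ≤ ‖ψ' a‖ * δ * ‖ψ a‖ * (t - a) := by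
  refine norm_image_sub_le_of_norm_deriv_le_segment'
    (fun s hs => (hasDerivAt_inner_of_schrodinger (hL' s hs) (hψ s hs) (hψ' s hs)).hasDerivWithinAt)
    fun s hs => ?_
  have hs' : s ∈ Icc a b := Ico_subset_Icc_self hs
  calc ‖-Complex.I * ⟪ψ' s, (L s - L' s) (ψ s)⟫_ℂ‖
      = ‖⟪ψ' s, (L s - L' s) (ψ s)⟫_ℂ‖ := by simp
    _ ≤ ‖ψ' s‖ * (‖L s - L' s‖ * ‖ψ s‖) :=
        (norm_inner_le_norm _ _).trans (by gcongr; exact (L s - L' s).le_opNorm _)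
    _ ≤ ‖ψ' a‖ * δ * ‖ψ a‖ := by
        rw [norm_eq_of_schrodinger hL hψ s hs', norm_eq_of_schrodinger hL' hψ' s hs', ← mul_assoc]
        gcongr
        exact hclose s hs'

end SchrodingerFlow

theorem schrodinger_evolution_overlap_bound_general
    (n : ℕ) (T δ : ℝ) (hT : 0 ≤ T)
    (H H' : ℝ → Matrix (Fin n) (Fin n) ℂ)
    (hH : ∀ t ∈ Set.Icc (0 : ℝ) T, (H t).IsHermitian)
    (hH' : ∀ t ∈ Set.Icc (0 : ℝ) T, (H' t).IsHermitian)
    (ψ ψ' : ℝ → EuclideanSpace ℂ (Fin n))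
    (hψ : ∀ t ∈ Set.Icc (0 : ℝ) T,
      HasDerivAt ψ ((-Complex.I) • (WithLp.toLp 2 ((H t).mulVec (ψ t)) : EuclideanSpace ℂ (Fin n))) t)
    (hψ' : ∀ t ∈ Set.Icc (0 : ℝ) T,
      HasDerivAt ψ' ((-Complex.I) • (WithLp.toLp 2 ((H' t).mulVec (ψ' t)) : EuclideanSpace ℂ (Fin n))) t)
    (h0 : ψ 0 = ψ' 0) (hnorm : ‖ψ 0‖ = 1)
    (hclose : ∀ t ∈ Set.Icc (0 : ℝ) T, ‖H t - H' t‖ ≤ δ) :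
    1 - δ * T ≤ (⟪ψ' T, ψ T⟫_ℂ).re := by
  -- `toEuclideanCLM A x` unfolds to `toLp (A *ᵥ x)`, so `hψ` and `hψ'` apply as they stand.
  have hbound := norm_inner_sub_inner_le_of_schrodinger
    (L := fun t => Matrix.toEuclideanCLM (n := Fin n) (𝕜 := ℂ) (H t))
    (L' := fun t => Matrix.toEuclideanCLM (n := Fin n) (𝕜 := ℂ) (H' t))
    (fun t ht => Matrix.isSymmetric_toEuclideanLin_iff.2 (hH t ht))
    (fun t ht => Matrix.isSymmetric_toEuclideanLin_iff.2 (hH' t ht)) hψ hψ'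
    (fun t ht => by rw [← map_sub, ← Matrix.cstar_norm_def]; exact hclose t ht) T ⟨hT, le_rfl⟩
  have hstart : ⟪ψ' 0, ψ 0⟫_ℂ = 1 := by
    rw [← h0, inner_self_eq_norm_sq_to_K, hnorm]
    norm_num
  rw [hstart, ← h0, hnorm, sub_zero, one_mul, mul_one] at hbound
  have hre := Complex.abs_re_le_norm (⟪ψ' T, ψ T⟫_ℂ - 1)
  rw [Complex.sub_re, Complex.one_re] at hre
  linarith [neg_abs_le ((⟪ψ' T, ψ T⟫_ℂ).re - 1)]

/-- If two time-dependent Hamiltonians stay within spectral distance `δ` of each other on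
`[0, T]`, then the solutions of the corresponding Schrödinger equations, starting from the same
normalized initial state, satisfy `Re⟪ψ'(T), ψ(T)⟫ ≥ 1 - δ T`. -/
theorem schrodinger_evolution_overlap_bound
    (n : ℕ) (hn : 0 < n) (T δ : ℝ) (hT : 0 ≤ T) (hδ : 0 ≤ δ)
    (H H' : ℝ → Matrix (Fin n) (Fin n) ℂ)
    (hH : ∀ t ∈ Set.Icc (0 : ℝ) T, (H t).IsHermitian)
    (hH' : ∀ t ∈ Set.Icc (0 : ℝ) T, (H' t).IsHermitian)
    (ψ ψ' : ℝ → EuclideanSpace ℂ (Fin n))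
    (hψ : ∀ t ∈ Set.Icc (0 : ℝ) T,
      HasDerivAt ψ ((-Complex.I) • (WithLp.toLp 2 ((H t).mulVec (ψ t)) : EuclideanSpace ℂ (Fin n))) t)
    (hψ' : ∀ t ∈ Set.Icc (0 : ℝ) T,
      HasDerivAt ψ' ((-Complex.I) • (WithLp.toLp 2 ((H' t).mulVec (ψ' t)) : EuclideanSpace ℂ (Fin n))) t)
    (h0 : ψ 0 = ψ' 0) (hnorm : ‖ψ 0‖ = 1)
    (hclose : ∀ t ∈ Set.Icc (0 : ℝ) T, ‖H t - H' t‖ ≤ δ) :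
    1 - δ * T ≤ (⟪ψ' T, ψ T⟫_ℂ).re :=
  schrodinger_evolution_overlap_bound_general n T δ hT H H' hH hH' ψ ψ' hψ hψ' h0 hnorm hclose
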